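/- arXiv:1207.6445 — 2 statements merged into one kernel-verified Lean document; each statement's English description precedes it below -/
import Mathlib

section
/- Let (q, ε, b) be a buyer type with knee x* = min((q − ε)/b, ε/(1 − b)), let 0 ≤ c < b, and let δ be a cost level with q − ε − x*·b ≤ δ ≤ q − ε. Set p̂ = b − (q − ε − δ)/x*. Then for every contract (x, p) with x ≥ 0, p ≥ 0 and C(x, p) ≤ δ, the seller's utility satisfies x·(p − c) ≤ x*·(p̂ − c); that is, among all contracts whose cost to the buyer is at most δ, the seller's utility is maximized by the contract (x*, p̂), whose cost to the buyer equals δ. -/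
/-- Expected loss of a type-(q, ε, b) buyer purchasing y units of deterministic
service and x units of stochastic service. -/
noncomputable def eLoss (q b y x : ℝ) : ℝ :=
  b * max (q - y - x) 0 + (1 - b) * max (q - y) 0

/-- A contract (x, p) is acceptable to a type-(q, ε, b) buyer. -/
def acceptable (q ε b x p : ℝ) : Prop :=
  ∃ y, 0 ≤ y ∧ eLoss q b y x ≤ ε ∧ y + x * p ≤ q - ε

/-- The cost of a contract (x, p) to a type-(q, ε, b) buyer. -/
noncomputable def cost (q ε b x p : ℝ) : ℝ :=
  sInf {z | ∃ y, 0 ≤ y ∧ eLoss q b y x ≤ ε ∧ z = y + x * p}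

/-- The knee of a type-(q, ε, b) buyer's acceptance region. -/
noncomputable def knee (q ε b : ℝ) : ℝ :=
  min ((q - ε) / b) (ε / (1 - b))

/-- The equivalent-price function of a type-(q, ε, b) buyer. -/
noncomputable def eqPrice (q ε b x' p' x : ℝ) : ℝ :=
  if x ≤ knee q ε b ∧ x' ≤ knee q ε b then b - (x' / x) * (b - p')
  else if knee q ε b ≤ x ∧ knee q ε b ≤ x' then x' * p' / x
  else if x' < knee q ε b ∧ knee q ε b < x then (b * (knee q ε b - x') + x' * p') / x
  else b - (knee q ε b * b - x' * p') / x

section Aux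

variable {q ε b x p y : ℝ}

lemma knee_pos (hb0 : 0 < b) (hb1 : b < 1) (hε0 : 0 < ε) (hεq : ε < q) :
    0 < knee q ε b := by
  unfold knee
  exact lt_min (div_pos (by linarith) hb0) (div_pos hε0 (by linarith))

lemma knee_le1 (hb0 : 0 < b) : b * knee q ε b ≤ q - ε := by
  have h := min_le_left ((q - ε) / b) (ε / (1 - b))
  unfold knee
  calc b * min ((q - ε) / b) (ε / (1 - b)) ≤ b * ((q - ε) / b) :=
        mul_le_mul_of_nonneg_left h hb0.le
    _ = q - ε := by field_simp

lemma knee_le2 (hb1 : b < 1) : (1 - b) * knee q ε b ≤ ε := by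
  have h := min_le_right ((q - ε) / b) (ε / (1 - b))
  have h1b : (0:ℝ) < 1 - b := by linarith
  unfold knee
  calc (1 - b) * min ((q - ε) / b) (ε / (1 - b)) ≤ (1 - b) * (ε / (1 - b)) :=
        mul_le_mul_of_nonneg_left h h1b.le
    _ = ε := by field_simp

/-- The minimal feasible y for a given x: feasibility. -/
lemma eLoss_y0 (hb0 : 0 < b) (hb1 : b < 1) (hε0 : 0 < ε) (hεq : ε < q) (hx : 0 ≤ x) :
    eLoss q b (q - ε - b * min x (knee q ε b)) x ≤ ε := by
  set m := min x (knee q ε b) with hm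
  have hm0 : 0 ≤ m := le_min hx (knee_pos hb0 hb1 hε0 hεq).le
  have hmx : m ≤ x := min_le_left _ _
  have hm2 : (1 - b) * m ≤ ε := by
    have := knee_le2 (q := q) (ε := ε) hb1
    have hmk : m ≤ knee q ε b := min_le_right _ _
    nlinarith
  unfold eLoss
  have h1 : max (q - (q - ε - b * m) - x) 0 ≤ ε - (1 - b) * m :=
    max_le (by nlinarith) (by linarith)
  have h2 : max (q - (q - ε - b * m)) 0 = q - (q - ε - b * m) := max_eq_left (by nlinarith)
  rw [h2]
  nlinarith [mul_le_mul_of_nonneg_left h1 hb0.le]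

/-- The minimal feasible y for a given x: minimality. -/
lemma y_lower (hb0 : 0 < b) (hb1 : b < 1) (hε0 : 0 < ε) (hεq : ε < q) (hx : 0 ≤ x)
    (hy0 : 0 ≤ y) (hL : eLoss q b y x ≤ ε) :
    q - ε - b * min x (knee q ε b) ≤ y := by
  have h1b : (0:ℝ) < 1 - b := by linarith
  set e₀ := ε / (1 - b) with he₀
  have he₀pos : 0 < e₀ := div_pos hε0 h1b
  have he₀eq : (1 - b) * e₀ = ε := by rw [he₀]; field_simp
  -- main step: y ≥ q - ε - b * min x e₀
  have key : q - ε - b * min x e₀ ≤ y := by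
    have hmin0 : 0 ≤ min x e₀ := le_min hx he₀pos.le
    rcases le_or_gt q y with hqy | hqy
    · nlinarith
    · rcases le_or_gt q (y + x) with hqyx | hqyx
      · -- q - y ≤ x and (1-b)(q-y) ≤ ε
        have hmax1 : (0:ℝ) ≤ max (q - y - x) 0 := le_max_right _ _
        have hmax2 : max (q - y) 0 = q - y := max_eq_left (by linarith)
        unfold eLoss at hL
        rw [hmax2] at hL
        have h3 : (1 - b) * (q - y) ≤ ε := by nlinarith
        have h4 : q - y ≤ e₀ := by
          rw [← he₀eq] at h3
          nlinarith
        have h5 : q - y ≤ min x e₀ := le_min (by linarith) h4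
        have h6 : (1 - b) * min x e₀ ≤ ε := by
          have := min_le_right x e₀
          nlinarith
        nlinarith
      · have hmax1 : max (q - y - x) 0 = q - y - x := max_eq_left (by linarith)
        have hmax2 : max (q - y) 0 = q - y := max_eq_left (by linarith)
        unfold eLoss at hL
        rw [hmax1, hmax2] at hL
        have hxe : x ≤ e₀ := by nlinarith
        rw [min_eq_left hxe]
        nlinarith
  -- now relate min x (knee) to min x e₀
  have hk : knee q ε b ≤ e₀ := min_le_right _ _
  rcases le_total x (knee q ε b) with hxk | hxk
  · have h1 : min x (knee q ε b) = x := min_eq_left hxk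
    have h2 : min x e₀ = x := min_eq_left (le_trans hxk hk)
    rw [h1]; rw [h2] at key; exact key
  · have h1 : min x (knee q ε b) = knee q ε b := min_eq_right hxk
    rw [h1]
    rcases le_total ((q - ε) / b) e₀ with hke | hke
    · -- knee = (q-ε)/b, so q - ε - b * knee = 0 ≤ y
      have hkval : knee q ε b = (q - ε) / b := min_eq_left hke
      have : b * knee q ε b = q - ε := by rw [hkval]; field_simp
      linarith
    · -- knee = e₀
      have hkval : knee q ε b = e₀ := min_eq_right hke
      have h2 : min x e₀ = e₀ := min_eq_right (hkval ▸ hxk)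
      rw [hkval]; rw [h2] at key; exact key

/-- Closed form of the cost. -/
lemma cost_eq (hb0 : 0 < b) (hb1 : b < 1) (hε0 : 0 < ε) (hεq : ε < q) (hx : 0 ≤ x) :
    cost q ε b x p = (q - ε - b * min x (knee q ε b)) + x * p := by
  set y₀ := q - ε - b * min x (knee q ε b) with hy₀
  have hy₀0 : 0 ≤ y₀ := by
    have h1 : b * min x (knee q ε b) ≤ b * knee q ε b :=
      mul_le_mul_of_nonneg_left (min_le_right _ _) hb0.le
    have h2 := knee_le1 (q := q) (ε := ε) hb0
    rw [hy₀]; linarith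
  have hmem : y₀ + x * p ∈ {z | ∃ y, 0 ≤ y ∧ eLoss q b y x ≤ ε ∧ z = y + x * p} :=
    ⟨y₀, hy₀0, eLoss_y0 hb0 hb1 hε0 hεq hx, rfl⟩
  have hlb : ∀ z ∈ {z | ∃ y, 0 ≤ y ∧ eLoss q b y x ≤ ε ∧ z = y + x * p},
      y₀ + x * p ≤ z := by
    rintro z ⟨y, hy0, hL, rfl⟩
    have := y_lower hb0 hb1 hε0 hεq hx hy0 hL
    linarith
  exact le_antisymm (csInf_le ⟨y₀ + x * p, hlb⟩ hmem) (le_csInf ⟨_, hmem⟩ hlb)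

end Aux

/-- Among all contracts whose cost to the buyer is at most δ
(with q − ε − x*·b ≤ δ ≤ q − ε), the seller's utility is maximized by
(x*, p̂) with p̂ = b − (q − ε − δ)/x*, whose cost to the buyer equals δ. -/
theorem stmt12 (q ε b c δ : ℝ) (hb0 : 0 < b) (hb1 : b < 1) (hε0 : 0 < ε) (hεq : ε < q)
    (hc0 : 0 ≤ c) (hcb : c < b)
    (hδ1 : q - ε - knee q ε b * b ≤ δ) (hδ2 : δ ≤ q - ε) :
    (∀ x p : ℝ, 0 ≤ x → 0 ≤ p → cost q ε b x p ≤ δ →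
      x * (p - c) ≤ knee q ε b * ((b - (q - ε - δ) / knee q ε b) - c)) ∧
    cost q ε b (knee q ε b) (b - (q - ε - δ) / knee q ε b) = δ := by
  have hkpos := knee_pos (q := q) (ε := ε) (b := b) hb0 hb1 hε0 hεq
  have hkne : knee q ε b ≠ 0 := ne_of_gt hkpos
  have hKdiv : knee q ε b * ((q - ε - δ) / knee q ε b) = q - ε - δ :=
    mul_div_cancel₀ _ hkne
  constructor
  · intro x p hx hp hcost
    rw [cost_eq hb0 hb1 hε0 hεq hx] at hcost
    have hxp : x * p ≤ δ - (q - ε) + b * min x (knee q ε b) := by linarith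
    have htarget : knee q ε b * ((b - (q - ε - δ) / knee q ε b) - c)
        = b * knee q ε b - (q - ε - δ) - c * knee q ε b := by
      rw [mul_sub, mul_sub, hKdiv]; ring
    rw [htarget]
    rcases le_total x (knee q ε b) with hxk | hxk
    · rw [min_eq_left hxk] at hxp
      nlinarith
    · rw [min_eq_right hxk] at hxp
      nlinarith
  · rw [cost_eq hb0 hb1 hε0 hεq hkpos.le, min_self]
    have : knee q ε b * (b - (q - ε - δ) / knee q ε b)
        = knee q ε b * b - (q - ε - δ) := by
      rw [mul_sub, hKdiv]
    rw [this]; ring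
end

section
/- Let there be K buyer types (q_i, ε_i, b_i) (i = 1, …, K) with 0 < b_1 ≤ b_2 ≤ … ≤ b_K < 1 and 0 < ε_i < q_i, whose knees x_i* = min((q_i − ε_i)/b_i, ε_i/(1 − b_i)) satisfy the monotonicity condition x_1* ≤ x_2* ≤ … ≤ x_K*. Let 0 < x_1 ≤ x_2 ≤ … ≤ x_K be bandwidths with x_i ≤ x_i* for every i, and define prices recursively by p_1 = b_1 and p_i = b_i − (x_{i−1}/x_i)·(b_i − p_{i−1}) for i = 2, …, K. Then the contract set {(x_1, p_1), …, (x_K, p_K)} is individually rational and incentive compatible: for every i, C_i(x_i, p_i) ≤ q_i − ε_i, and for every i and j, C_i(x_i, p_i) ≤ C_i(x_j, p_j), where C_i is the cost function of type i. -/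
lemma cost_formula (q ε b x p : ℝ) (hb0 : 0 < b) (hb1 : b < 1) (hε : 0 < ε)
    (hεq : ε < q) (hx : 0 ≤ x) :
    cost q ε b x p = (q - ε - b * min x (knee q ε b)) + x * p := by
  have h1b : 0 < 1 - b := by linarith
  have hkq : knee q ε b ≤ (q - ε) / b := min_le_left _ _
  have hkε : knee q ε b ≤ ε / (1 - b) := min_le_right _ _
  set k := knee q ε b with hkdef
  set Y := q - ε - b * min x k with hY
  have hY0 : 0 ≤ Y := by
    have h1 : min x k ≤ (q - ε) / b := le_trans (min_le_right _ _) hkq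
    have h2 := (le_div_iff₀ hb0).mp h1
    rw [hY]; nlinarith
  have hfeas : eLoss q b Y x ≤ ε := by
    rcases le_total x k with hxk | hkx
    · rw [min_eq_left hxk] at hY
      have hxε : x * (1 - b) ≤ ε := (le_div_iff₀ h1b).mp (hxk.trans hkε)
      have h1 : q - Y - x = ε - (1 - b) * x := by rw [hY]; ring
      have h2 : q - Y = ε + b * x := by rw [hY]; ring
      rw [eLoss, h1, h2, max_eq_left (by nlinarith), max_eq_left (by nlinarith)]
      have : b * (ε - (1 - b) * x) + (1 - b) * (ε + b * x) = ε := by ring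
      linarith
    · rw [min_eq_right hkx] at hY
      rcases le_total ((q - ε) / b) (ε / (1 - b)) with hc | hc
      · have hkk : k = (q - ε) / b := min_eq_left hc
        have hY' : Y = 0 := by rw [hY, hkk]; field_simp; ring
        have hqb : q - ε ≤ x * b := by
          have h2 := hkx; rw [hkk] at h2; exact (div_le_iff₀ hb0).mp h2
        have h1bq : (1 - b) * q ≤ ε := by
          rw [div_le_div_iff₀ hb0 h1b] at hc; nlinarith
        rw [hY', eLoss]
        rcases le_total q x with hqx | hxq
        · rw [show q - 0 - x = q - x by ring, max_eq_right (by linarith),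
            max_eq_left (by linarith)]
          nlinarith
        · rw [show q - 0 - x = q - x by ring, max_eq_left (by linarith),
            max_eq_left (by linarith)]
          nlinarith
      · have hkk : k = ε / (1 - b) := min_eq_right hc
        have hbk : b * k = ε / (1 - b) - ε := by rw [hkk]; field_simp; ring
        have h1 : q - Y = ε / (1 - b) := by rw [hY, hbk]; ring
        have hkx' : ε / (1 - b) ≤ x := by rw [hkk] at hkx; exact hkx
        have h2 : q - Y - x ≤ 0 := by rw [sub_nonpos]; linarith [h1]
        rw [eLoss, max_eq_right h2, h1,
          max_eq_left (le_of_lt (div_pos hε h1b))]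
        rw [mul_zero, zero_add]
        rw [mul_div_assoc']
        rw [mul_comm, mul_div_assoc, div_self h1b.ne', mul_one]
  have hmin : ∀ y, 0 ≤ y → eLoss q b y x ≤ ε → Y ≤ y := by
    intro y hy0 hLy
    by_contra hlt
    push_neg at hlt
    rw [eLoss] at hLy
    rcases le_total x k with hxk | hkx
    · rw [min_eq_left hxk] at hY
      have hxε : x * (1 - b) ≤ ε := (le_div_iff₀ h1b).mp (hxk.trans hkε)
      have h1 : 0 ≤ q - y - x := by nlinarith
      have h2 : 0 ≤ q - y := by nlinarith
      rw [max_eq_left h1, max_eq_left h2] at hLy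
      nlinarith
    · rw [min_eq_right hkx] at hY
      rcases le_total ((q - ε) / b) (ε / (1 - b)) with hc | hc
      · have hkk : k = (q - ε) / b := min_eq_left hc
        have : Y = 0 := by rw [hY, hkk]; field_simp; ring
        linarith
      · have hkk : k = ε / (1 - b) := min_eq_right hc
        have hbk : b * k = ε / (1 - b) - ε := by rw [hkk]; field_simp; ring
        have h1 : ε / (1 - b) < q - y := by nlinarith
        have h2 : 0 ≤ q - y := le_trans (le_of_lt (div_pos hε h1b)) h1.le
        rw [max_eq_left h2] at hLy
        have h3 : (0:ℝ) ≤ max (q - y - x) 0 := le_max_right _ _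
        have h4 : ε < (q - y) * (1 - b) := (div_lt_iff₀ h1b).mp h1
        nlinarith [mul_nonneg hb0.le h3]
  rw [cost]
  apply le_antisymm
  · apply csInf_le
    · refine ⟨Y + x * p, ?_⟩
      rintro z ⟨y, hy, hL, rfl⟩
      have := hmin y hy hL
      linarith
    · exact ⟨Y, hY0, hfeas, rfl⟩
  · refine le_csInf ⟨Y + x * p, Y, hY0, hfeas, rfl⟩ ?_
    rintro z ⟨y, hy, hL, rfl⟩
    have := hmin y hy hL
    linarith

/-- Under the monotonicity condition, the recursively priced contract
set is individually rational and incentive compatible. -/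
theorem stmt16 (K : ℕ) (hK : 0 < K) (q ε b x p : ℕ → ℝ)
    (hb0 : ∀ i < K, 0 < b i) (hb1 : ∀ i < K, b i < 1)
    (hε0 : ∀ i < K, 0 < ε i) (hεq : ∀ i < K, ε i < q i)
    (hbmono : ∀ i, i + 1 < K → b i ≤ b (i + 1))
    (hMC : ∀ i, i + 1 < K →
      knee (q i) (ε i) (b i) ≤ knee (q (i + 1)) (ε (i + 1)) (b (i + 1)))
    (hx0 : ∀ i < K, 0 < x i) (hxmono : ∀ i, i + 1 < K → x i ≤ x (i + 1))
    (hxknee : ∀ i < K, x i ≤ knee (q i) (ε i) (b i))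
    (hp0 : p 0 = b 0)
    (hprec : ∀ i, i + 1 < K → p (i + 1) = b (i + 1) - (x i / x (i + 1)) * (b (i + 1) - p i)) :
    ∀ i < K, cost (q i) (ε i) (b i) (x i) (p i) ≤ q i - ε i ∧
      ∀ j < K, cost (q i) (ε i) (b i) (x i) (p i) ≤
        cost (q i) (ε i) (b i) (x j) (p j) := by
  have hbch : ∀ a c : ℕ, a ≤ c → c < K → b a ≤ b c := by
    intro a c hac
    induction c, hac using Nat.le_induction with
    | base => exact fun _ => le_refl _
    | succ n hn ih => exact fun h => (ih (by omega)).trans (hbmono n h)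
  have hpb : ∀ i, i < K → p i ≤ b i := by
    intro i
    induction i with
    | zero => exact fun _ => le_of_eq hp0
    | succ n ih =>
      intro h
      have hn : n < K := by omega
      rw [hprec n h]
      have h1 : 0 ≤ (x n / x (n + 1)) * (b (n + 1) - p n) := by
        apply mul_nonneg (div_nonneg (hx0 n hn).le (hx0 _ h).le)
        have := hbmono n h
        have := ih hn
        linarith
      linarith
  have hcost : ∀ i j, i < K → j < K →
      cost (q i) (ε i) (b i) (x j) (p j) =
        (q i - ε i - b i * min (x j) (knee (q i) (ε i) (b i))) + x j * p j :=
    fun i j hi hj => cost_formula _ _ _ _ _ (hb0 i hi) (hb1 i hi) (hε0 i hi)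
      (hεq i hi) (hx0 j hj).le
  have hstep : ∀ j, j + 1 < K → ∀ c : ℝ,
      x (j + 1) * (c - p (j + 1)) - x j * (c - p j)
        = (x (j + 1) - x j) * (c - b (j + 1)) := by
    intro j hj c
    have hxj1 : x (j + 1) ≠ 0 := (hx0 _ hj).ne'
    rw [hprec j hj]
    field_simp
    ring
  intro t ht
  have hup : ∀ d, t + d < K →
      x (t + d) * (b t - p (t + d)) ≤ x t * (b t - p t) := by
    intro d
    induction d with
    | zero => exact fun _ => le_refl _
    | succ n ih =>
      intro h
      have hjK : t + n + 1 < K := by omega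
      have heq := hstep (t + n) (by omega) (b t)
      have hb' : b t ≤ b (t + n + 1) := hbch t (t + n + 1) (by omega) (by omega)
      have hx' : x (t + n) ≤ x (t + n + 1) := hxmono (t + n) (by omega)
      have hG : x (t + n + 1) * (b t - p (t + n + 1))
          ≤ x (t + n) * (b t - p (t + n)) := by
        nlinarith [mul_nonneg (sub_nonneg.mpr hx') (sub_nonneg.mpr hb')]
      have hih := ih (by omega)
      calc x (t + (n + 1)) * (b t - p (t + (n + 1)))
          = x (t + n + 1) * (b t - p (t + n + 1)) := rfl
        _ ≤ x (t + n) * (b t - p (t + n)) := hG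
        _ ≤ x t * (b t - p t) := hih
  have hdown : ∀ d, d ≤ t →
      x (t - d) * (b t - p (t - d)) ≤ x t * (b t - p t) := by
    intro d
    induction d with
    | zero => simp
    | succ n ih =>
      intro h
      have hjn : t - (n + 1) + 1 = t - n := by omega
      have hj1K : t - (n + 1) + 1 < K := by omega
      have heq := hstep (t - (n + 1)) hj1K (b t)
      rw [hjn] at heq
      have hb' : b (t - n) ≤ b t := hbch _ _ (by omega) ht
      have hx' : x (t - (n + 1)) ≤ x (t - n) := by
        have := hxmono (t - (n + 1)) hj1K
        rwa [hjn] at this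
      have hG : x (t - (n + 1)) * (b t - p (t - (n + 1)))
          ≤ x (t - n) * (b t - p (t - n)) := by
        nlinarith [mul_nonneg (sub_nonneg.mpr hx') (sub_nonneg.mpr hb')]
      exact hG.trans (ih (by omega))
  have hGall : ∀ j, j < K → x j * (b t - p j) ≤ x t * (b t - p t) := by
    intro j hj
    rcases le_total j t with hjt | htj
    · have := hdown (t - j) (by omega)
      rwa [show t - (t - j) = j by omega] at this
    · have := hup (j - t) (by omega)
      rwa [show t + (j - t) = j by omega] at this
  constructor
  · rw [hcost t t ht ht, min_eq_left (hxknee t ht)]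
    have h1 := hpb t ht
    nlinarith [hx0 t ht]
  · intro j hj
    rw [hcost t t ht ht, hcost t j ht hj, min_eq_left (hxknee t ht)]
    have h1 : min (x j) (knee (q t) (ε t) (b t)) ≤ x j := min_le_left _ _
    have h2 := hGall j hj
    have hb0t := (hb0 t ht).le
    nlinarith [mul_le_mul_of_nonneg_left h1 hb0t]
end
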